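/- Let Q be a finite-dimensional real vector space, Δ° ⊆ Q* a linear subspace annihilating a subspace Δ ⊆ Q, H : Q × Q* → ℝ a C¹ Hamiltonian, and (q,p) : [0,T] → Q × Q* a C¹ curve with q̇(t) ∈ Δ for all t, q(0) = q₀. Suppose the action S[q,p] = ∫₀ᵀ(⟨p, q̇⟩ − H(q,p)) dt is stationary for all C¹ variations (δq, δp) with δq(t) ∈ Δ for all t and δq(0) = 0 (and δq(T) ∈ Δ unrestricted otherwise). Then q̇(t) = D_p H(q(t),p(t)) ∈ Δ, ṗ(t) + D_q H(q(t),p(t)) ∈ Δ° for all t ∈ (0,T), and the natural boundary condition p(T) ∈ Δ° holds. -/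

import Mathlib

/-!
Differentiating the action under the integral sign along `(q + ε δq, p + ε δp)` turns
stationarity into the vanishing of the first variation
`∫₀ᵀ ⟨δp, q̇⟩ + ⟨p, δq̇⟩ − DH(q,p)(δq,δp) dt`. Variations `(0, φ eᵢ)` give `q̇ = D_pH` by the
fundamental lemma of the calculus of variations. Variations `(φ v, 0)` with `v ∈ Δ` give, after
integrating by parts, `φ(T) ⟨p(T), v⟩ = ∫₀ᵀ φ (⟨ṗ, v⟩ + D_qH v) dt` for every `φ` with
`φ(0) = 0`: test functions that also vanish at `T` give `ṗ + D_qH ∈ Δ°`, after which `φ(t) = t`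
gives `p(T) ∈ Δ°`.
-/

open Set

/-- The annihilator `Δ° = {α : ⟨α, v⟩ = 0 for all v ∈ Δ}` of a subspace `Δ ⊆ ℝⁿ`,
identifying the dual with `ℝⁿ` via the dot pairing. -/
def annihilatorOf (n : ℕ) (Δ : Submodule ℝ (Fin n → ℝ)) : Set (Fin n → ℝ) :=
  {α | ∀ v ∈ Δ, (∑ i, α i * v i) = 0}

open MeasureTheory Metric Function Matrix
open scoped ContDiff

section Calculus

variable {E : Type*} [NormedAddCommGroup E] [NormedSpace ℝ E]

theorem intervalIntegral.hasDerivAt_integral_of_continuous {F F' : ℝ → ℝ → E} {a b x₀ : ℝ}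
    (hF : Continuous (uncurry F)) (hF' : Continuous (uncurry F'))
    (hFF' : ∀ x t, HasDerivAt (fun x => F x t) (F' x t) x) :
    HasDerivAt (fun x => ∫ t in a..b, F x t) (∫ t in a..b, F' x₀ t) x₀ := by
  obtain ⟨C, hC⟩ := ((isCompact_closedBall x₀ 1).prod isCompact_uIcc).exists_bound_of_continuousOn
    (hF'.continuousOn (s := closedBall x₀ 1 ×ˢ uIcc a b))
  have hF_slice (x : ℝ) : Continuous (F x) := hF.comp (Continuous.prodMk_right x)
  refine (intervalIntegral.hasDerivAt_integral_of_dominated_loc_of_deriv_le (bound := fun _ => C)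
    (ball_mem_nhds x₀ one_pos) (.of_forall fun x => (hF_slice x).aestronglyMeasurable)
    ((hF_slice x₀).intervalIntegrable a b)
    (hF'.comp (Continuous.prodMk_right x₀)).aestronglyMeasurable
    (.of_forall fun t ht x hx => hC (x, t) ⟨ball_subset_closedBall hx, uIoc_subset_uIcc ht⟩)
    intervalIntegrable_const (.of_forall fun t _ x _ => hFF' x t)).2

theorem HasDerivAt.const_add_smul (u v : E) (x : ℝ) : HasDerivAt (fun ε : ℝ => u + ε • v) v x := by
  simpa using ((hasDerivAt_id x).smul_const v).const_add u

theorem HasDerivAt.dotProduct {ι : Type*} [Fintype ι] {f g : ℝ → ι → ℝ} {f' g' : ι → ℝ} {x : ℝ}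
    (hf : HasDerivAt f f' x) (hg : HasDerivAt g g' x) :
    HasDerivAt (fun y => f y ⬝ᵥ g y) (f' ⬝ᵥ g x + f x ⬝ᵥ g') x := by
  simp only [_root_.dotProduct, ← Finset.sum_add_distrib]
  exact .fun_sum fun i _ => (hasDerivAt_pi.1 hf i).mul (hasDerivAt_pi.1 hg i)

theorem eqOn_zero_of_forall_intervalIntegral_smul_eq_zero [CompleteSpace E] {a b : ℝ}
    {h : ℝ → E} (hh : Continuous h)
    (hφ : ∀ φ : ℝ → ℝ, ContDiff ℝ ∞ φ → tsupport φ ⊆ Ioo a b → ∫ t in a..b, φ t • h t = 0) :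
    EqOn h 0 (Ioo a b) := by
  intro t ht
  have hae := (isOpen_Ioo (a := a) (b := b)).ae_eq_zero_of_integral_contDiff_smul_eq_zero
    (μ := volume) (hh.locallyIntegrable.locallyIntegrableOn _) fun φ hφs _ hsupp => ?_
  · exact Measure.eqOn_open_of_ae_eq (g := 0) ((ae_restrict_iff' measurableSet_Ioo).2 hae)
      isOpen_Ioo hh.continuousOn continuousOn_const ht
  rw [← hφ φ hφs hsupp, intervalIntegral.integral_of_le (ht.1.trans ht.2).le,
    setIntegral_eq_integral_of_forall_compl_eq_zero fun s hs => ?_]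
  rw [image_eq_zero_of_notMem_tsupport fun hs' => hs (Ioo_subset_Ioc_self (hsupp hs')), zero_smul]

end Calculus

/-- `hweak` is the weak form of `P' + A = 0` on `[a, b]` with a free right endpoint, whose natural
boundary condition is `P b = 0`. -/
theorem eqOn_deriv_add_zero_and_eq_zero_of_weak_eq {a b : ℝ} (hab : a < b)
    {P P' A : ℝ → ℝ} (hP : ∀ t, HasDerivAt P (P' t) t) (hP' : Continuous P') (hA : Continuous A)
    (hweak : ∀ φ : ℝ → ℝ, ContDiff ℝ 1 φ → φ a = 0 →
      ∫ t in a..b, (deriv φ t * P t - φ t * A t) = 0) :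
    EqOn (P' + A) 0 (Icc a b) ∧ P b = 0 := by
  have hboundary : ∀ φ : ℝ → ℝ, ContDiff ℝ 1 φ → φ a = 0 →
      φ b * P b = ∫ t in a..b, φ t * (P' + A) t := by
    intro φ hφ hφa
    have hφ' : Continuous (deriv φ) := hφ.continuous_deriv le_rfl
    have hP_cont : Continuous P := continuous_iff_continuousAt.2 fun t => (hP t).continuousAt
    have hparts := intervalIntegral.integral_mul_deriv_eq_deriv_mul
      (fun t _ => (hφ.differentiable one_ne_zero t).hasDerivAt) (fun t _ => hP t)
      (hφ'.intervalIntegrable a b) (hP'.intervalIntegrable a b)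
    have hweak' : ∫ t in a..b, deriv φ t * P t = ∫ t in a..b, φ t * A t := by
      rw [← sub_eq_zero, ← intervalIntegral.integral_sub
        ((hφ'.fun_mul hP_cont).intervalIntegrable a b)
        ((hφ.continuous.fun_mul hA).intervalIntegrable a b)]
      exact hweak φ hφ hφa
    calc φ b * P b = (∫ t in a..b, φ t * P' t) + ∫ t in a..b, deriv φ t * P t := by
          rw [hparts, hφa]; ring
      _ = (∫ t in a..b, φ t * P' t) + ∫ t in a..b, φ t * A t := by rw [hweak']
      _ = ∫ t in a..b, φ t * (P' + A) t := by
          rw [← intervalIntegral.integral_add ((hφ.continuous.fun_mul hP').intervalIntegrable a b)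
            ((hφ.continuous.fun_mul hA).intervalIntegrable a b)]
          simp only [Pi.add_apply, mul_add]
  have hEL : EqOn (P' + A) 0 (Ioo a b) :=
    eqOn_zero_of_forall_intervalIntegral_smul_eq_zero (hP'.add hA) fun φ hφ hsupp => by
      simp_rw [smul_eq_mul]
      rw [← hboundary φ (hφ.of_le (by norm_num))
        (image_eq_zero_of_notMem_tsupport fun h => (hsupp h).1.false),
        image_eq_zero_of_notMem_tsupport fun h => (hsupp h).2.false, zero_mul]
  have hEL_Icc : EqOn (P' + A) 0 (Icc a b) := by
    simpa [closure_Ioo hab.ne] using hEL.closure (hP'.add hA) continuous_const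
  refine ⟨hEL_Icc, ?_⟩
  have hboundary_id := hboundary (fun t => t - a) (by fun_prop) (sub_self a)
  rw [intervalIntegral.integral_congr (g := 0) fun t ht => by
    simp [hEL_Icc (uIcc_of_le hab.le ▸ ht)]] at hboundary_id
  simpa [(sub_pos.2 hab).ne'] using hboundary_id

section PartialDerivatives

variable {𝕜 E F G : Type*} [NontriviallyNormedField 𝕜] [NormedAddCommGroup E] [NormedSpace 𝕜 E]
  [NormedAddCommGroup F] [NormedSpace 𝕜 F] [NormedAddCommGroup G] [NormedSpace 𝕜 G]
  {f : E → F → G} {a : E} {b : F}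

theorem fderiv_apply_left_eq_fderiv_uncurry_comp_inl (hf : DifferentiableAt 𝕜 (uncurry f) (a, b)) :
    fderiv 𝕜 (fun x => f x b) a = (fderiv 𝕜 (uncurry f) (a, b)).comp (.inl 𝕜 E F) :=
  (hf.hasFDerivAt.comp (g := uncurry f) a (hasFDerivAt_prodMk_left (𝕜 := 𝕜) a b)).fderiv

theorem fderiv_apply_right_eq_fderiv_uncurry_comp_inr (hf : DifferentiableAt 𝕜 (uncurry f) (a, b)) :
    fderiv 𝕜 (fun y => f a y) b = (fderiv 𝕜 (uncurry f) (a, b)).comp (.inr 𝕜 E F) :=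
  (hf.hasFDerivAt.comp (g := uncurry f) b (hasFDerivAt_prodMk_right (𝕜 := 𝕜) a b)).fderiv

end PartialDerivatives

theorem dotProduct_apply_single_eq {ι R F : Type*} [Fintype ι] [DecidableEq ι] [CommSemiring R]
    [FunLike F (ι → R) R] [LinearMapClass F R (ι → R) R] (L : F) (v : ι → R) :
    (fun i => L (Pi.single i 1)) ⬝ᵥ v = L v := by
  conv_rhs => rw [pi_eq_sum_univ' v, map_sum]
  simp [_root_.dotProduct, mul_comm]

section PhaseAction

variable {ι : Type*} [Fintype ι] {T : ℝ} {H : (ι → ℝ) → (ι → ℝ) → ℝ} {q p : ℝ → ι → ℝ}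

noncomputable def phaseAction (T : ℝ) (H : (ι → ℝ) → (ι → ℝ) → ℝ) (q p : ℝ → ι → ℝ) : ℝ :=
  ∫ t in (0 : ℝ)..T, (p t ⬝ᵥ deriv q t - H (q t) (p t))

noncomputable def phaseActionVariation (T : ℝ) (H : (ι → ℝ) → (ι → ℝ) → ℝ)
    (q p δq δp : ℝ → ι → ℝ) : ℝ :=
  ∫ t in (0 : ℝ)..T,
    (δp t ⬝ᵥ deriv q t + p t ⬝ᵥ deriv δq t - fderiv ℝ (uncurry H) (q t, p t) (δq t, δp t))

theorem hasDerivAt_phaseAction_add_smul (hH : ContDiff ℝ 1 (uncurry H)) (hq : ContDiff ℝ 1 q)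
    (hp : ContDiff ℝ 1 p) {δq δp : ℝ → ι → ℝ} (hδq : ContDiff ℝ 1 δq) (hδp : ContDiff ℝ 1 δp) :
    HasDerivAt (fun ε : ℝ => phaseAction T H (fun t => q t + ε • δq t) (fun t => p t + ε • δp t))
      (phaseActionVariation T H q p δq δp) 0 := by
  have hderiv (ε t : ℝ) : deriv (fun s => q s + ε • δq s) t = deriv q t + ε • deriv δq t :=
    ((hq.differentiable one_ne_zero t).hasDerivAt.add
      ((hδq.differentiable one_ne_zero t).hasDerivAt.const_smul ε)).deriv
  have hq' : Continuous (deriv q) := hq.continuous_deriv le_rfl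
  have hδq' : Continuous (deriv δq) := hδq.continuous_deriv le_rfl
  have hH' : Continuous (fderiv ℝ (uncurry H)) := hH.continuous_fderiv one_ne_zero
  have key := intervalIntegral.hasDerivAt_integral_of_continuous (a := 0) (b := T) (x₀ := 0)
    (F := fun ε t => (p t + ε • δp t) ⬝ᵥ (deriv q t + ε • deriv δq t)
      - H (q t + ε • δq t) (p t + ε • δp t))
    (F' := fun ε t => δp t ⬝ᵥ (deriv q t + ε • deriv δq t) + (p t + ε • δp t) ⬝ᵥ deriv δq t
      - fderiv ℝ (uncurry H) (q t + ε • δq t, p t + ε • δp t) (δq t, δp t))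
    (by fun_prop) (by fun_prop) fun ε t => ?_
  · simpa [phaseAction, phaseActionVariation, hderiv] using key
  · exact ((HasDerivAt.const_add_smul _ _ ε).dotProduct (.const_add_smul _ _ ε)).sub
      ((hH.differentiable one_ne_zero _).hasFDerivAt.comp_hasDerivAt ε
        (.const_add_smul (q t, p t) (δq t, δp t) ε))

theorem hamilton_position_equation [DecidableEq ι] (hH : ContDiff ℝ 1 (uncurry H))
    (hq : ContDiff ℝ 1 q) (hp : ContDiff ℝ 1 p)
    (hvar : ∀ δp : ℝ → ι → ℝ, ContDiff ℝ 1 δp → phaseActionVariation T H q p 0 δp = 0) :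
    ∀ t ∈ Ioo 0 T, deriv q t = fun i => fderiv ℝ (fun p' => H (q t) p') (p t) (Pi.single i 1) := by
  intro t ht
  ext i
  have hq' : Continuous (deriv q) := hq.continuous_deriv le_rfl
  have hH' : Continuous (fderiv ℝ (uncurry H)) := hH.continuous_fderiv one_ne_zero
  have hEL : EqOn (fun s => deriv q s i - fderiv ℝ (uncurry H) (q s, p s) (0, Pi.single i 1)) 0
      (Ioo 0 T) :=
    eqOn_zero_of_forall_intervalIntegral_smul_eq_zero (by fun_prop) fun φ hφ _ => by
      refine .trans ?_ (hvar (fun s => φ s • Pi.single i 1)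
        ((hφ.of_le (by norm_num)).smul contDiff_const))
      rw [phaseActionVariation]
      apply intervalIntegral.integral_congr
      intro s _
      dsimp only [Pi.zero_apply]
      rw [show ((0 : ι → ℝ), φ s • Pi.single i (1 : ℝ)) = φ s • (0, Pi.single i 1) by simp,
        map_smul]
      simp [smul_dotProduct, single_dotProduct, mul_sub]
  rw [fderiv_apply_right_eq_fderiv_uncurry_comp_inr (hH.differentiable one_ne_zero _)]
  simpa [sub_eq_zero] using hEL ht

theorem hamilton_momentum_equation_and_transversality (hT : 0 < T) (hH : ContDiff ℝ 1 (uncurry H))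
    (hq : ContDiff ℝ 1 q) (hp : ContDiff ℝ 1 p) {v : ι → ℝ}
    (hvar : ∀ φ : ℝ → ℝ, ContDiff ℝ 1 φ → φ 0 = 0 →
      phaseActionVariation T H q p (fun t => φ t • v) 0 = 0) :
    (∀ t ∈ Ioo 0 T, deriv p t ⬝ᵥ v + fderiv ℝ (fun q' => H q' (p t)) (q t) v = 0) ∧
      p T ⬝ᵥ v = 0 := by
  have hP (t : ℝ) : HasDerivAt (fun s => p s ⬝ᵥ v) (deriv p t ⬝ᵥ v) t := by
    simpa using (hp.differentiable one_ne_zero t).hasDerivAt.dotProduct (hasDerivAt_const t v)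
  have hp' : Continuous (deriv p) := hp.continuous_deriv le_rfl
  have hH' : Continuous (fderiv ℝ (uncurry H)) := hH.continuous_fderiv one_ne_zero
  obtain ⟨hEL, hbdry⟩ := eqOn_deriv_add_zero_and_eq_zero_of_weak_eq hT hP
    (by fun_prop) (A := fun t => fderiv ℝ (uncurry H) (q t, p t) (v, 0)) (by fun_prop)
    fun φ hφ hφ0 => by
      refine .trans ?_ (hvar φ hφ hφ0)
      rw [phaseActionVariation]
      apply intervalIntegral.integral_congr
      intro t _
      dsimp only [Pi.zero_apply]
      have hφv : deriv (fun s => φ s • v) t = deriv φ t • v :=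
        ((hφ.differentiable one_ne_zero t).hasDerivAt.smul_const v).deriv
      rw [hφv, show (φ t • v, (0 : ι → ℝ)) = φ t • (v, 0) by simp, map_smul]
      simp [dotProduct_smul]
  refine ⟨fun t ht => ?_, hbdry⟩
  rw [fderiv_apply_left_eq_fderiv_uncurry_comp_inl (hH.differentiable one_ne_zero _)]
  simpa using hEL (Ioo_subset_Icc_self ht)

end PhaseAction

theorem hamilton_dAlembert_constrained_general
    (n : ℕ) (T : ℝ) (hT : 0 < T)
    (Δ : Submodule ℝ (Fin n → ℝ))
    (H : (Fin n → ℝ) → (Fin n → ℝ) → ℝ)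
    (hH : ContDiff ℝ 1 (fun x : (Fin n → ℝ) × (Fin n → ℝ) => H x.1 x.2))
    (q p : ℝ → (Fin n → ℝ)) (hq : ContDiff ℝ 1 q) (hp : ContDiff ℝ 1 p)
    (hconstr : ∀ t : ℝ, deriv q t ∈ Δ)
    (hstat : ∀ δq δp : ℝ → (Fin n → ℝ), ContDiff ℝ 1 δq → ContDiff ℝ 1 δp →
      (∀ t : ℝ, δq t ∈ Δ) → δq 0 = 0 →
      deriv (fun ε : ℝ =>
        ∫ t in (0 : ℝ)..T,
          ((∑ i, (p t + ε • δp t) i * deriv (fun s => q s + ε • δq s) t i)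
            - H (q t + ε • δq t) (p t + ε • δp t))) 0 = 0) :
    (∀ t ∈ Ioo (0 : ℝ) T,
      deriv q t = (fun i => fderiv ℝ (fun p' => H (q t) p') (p t) (Pi.single i 1)) ∧
      deriv q t ∈ Δ ∧
      (fun i => deriv p t i + fderiv ℝ (fun q' => H q' (p t)) (q t) (Pi.single i 1))
        ∈ annihilatorOf n Δ) ∧
    p T ∈ annihilatorOf n Δ := by
  have hvar (δq δp : ℝ → Fin n → ℝ) (hδq : ContDiff ℝ 1 δq) (hδp : ContDiff ℝ 1 δp)
      (hΔ : ∀ t, δq t ∈ Δ) (h0 : δq 0 = 0) : phaseActionVariation T H q p δq δp = 0 :=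
    -- the function differentiated in `hstat` is `phaseAction` along the variation, unfolded
    (hasDerivAt_phaseAction_add_smul hH hq hp hδq hδp).deriv.symm.trans
      (hstat δq δp hδq hδp hΔ h0)
  have hmomentum (v : Fin n → ℝ) (hv : v ∈ Δ) :=
    hamilton_momentum_equation_and_transversality hT hH hq hp fun φ hφ hφ0 =>
      hvar (fun t => φ t • v) 0 (hφ.smul contDiff_const) contDiff_const
        (fun t => Δ.smul_mem _ hv) (by simp [hφ0])
  have hposition := hamilton_position_equation hH hq hp fun δp hδp =>
    hvar 0 δp contDiff_const hδp (fun _ => Δ.zero_mem) rfl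
  refine ⟨fun t ht => ⟨hposition t ht, hconstr t, fun v hv => ?_⟩, fun v hv => (hmomentum v hv).2⟩
  change (deriv p t + fun i => fderiv ℝ (fun q' => H q' (p t)) (q t) (Pi.single i 1)) ⬝ᵥ v = 0
  rw [add_dotProduct, dotProduct_apply_single_eq]
  exact (hmomentum v hv).1 t ht

/-- Hamilton–d'Alembert principle in phase space with relaxed terminal
variations. If the action `S[q,p] = ∫₀ᵀ(⟨p, q̇⟩ − H(q,p)) dt` is stationary along a
constrained curve (`q̇(t) ∈ Δ`, `q(0) = q₀`) for all C¹ variations `(δq, δp)` with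
`δq(t) ∈ Δ` and `δq(0) = 0`, then `q̇ = D_p H ∈ Δ`, `ṗ + D_q H ∈ Δ°` on `(0,T)`, and the
natural boundary condition `p(T) ∈ Δ°` holds. -/
theorem hamilton_dAlembert_constrained
    (n : ℕ) (T : ℝ) (hT : 0 < T)
    (Δ : Submodule ℝ (Fin n → ℝ))
    (H : (Fin n → ℝ) → (Fin n → ℝ) → ℝ)
    (hH : ContDiff ℝ 1 (fun x : (Fin n → ℝ) × (Fin n → ℝ) => H x.1 x.2))
    (q p : ℝ → (Fin n → ℝ)) (hq : ContDiff ℝ 1 q) (hp : ContDiff ℝ 1 p)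
    (q₀ : Fin n → ℝ) (hq0 : q 0 = q₀)
    (hconstr : ∀ t : ℝ, deriv q t ∈ Δ)
    (hstat : ∀ δq δp : ℝ → (Fin n → ℝ), ContDiff ℝ 1 δq → ContDiff ℝ 1 δp →
      (∀ t : ℝ, δq t ∈ Δ) → δq 0 = 0 →
      deriv (fun ε : ℝ =>
        ∫ t in (0 : ℝ)..T,
          ((∑ i, (p t + ε • δp t) i * deriv (fun s => q s + ε • δq s) t i)
            - H (q t + ε • δq t) (p t + ε • δp t))) 0 = 0) :
    (∀ t ∈ Ioo (0 : ℝ) T,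
      deriv q t = (fun i => fderiv ℝ (fun p' => H (q t) p') (p t) (Pi.single i 1)) ∧
      deriv q t ∈ Δ ∧
      (fun i => deriv p t i + fderiv ℝ (fun q' => H q' (p t)) (q t) (Pi.single i 1))
        ∈ annihilatorOf n Δ) ∧
    p T ∈ annihilatorOf n Δ :=
  hamilton_dAlembert_constrained_general n T hT Δ H hH q p hq hp hconstr hstat
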